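/- arXiv:2403.12648 — 4 statements merged into one kernel-verified Lean document; each statement's English description precedes it below -/
import Mathlib

section
/- Let SP(v) denote the number of pushback operations performed on node v during a run of ApproxContributions(t, α, ε). Then SP(v) ≤ π(v,t)/(α·ε) for every v, and hence the total number of pushback operations is at most n·π(t)/(α·ε). -/
open Finset

variable {V : Type*}

/-- Out-neighbors of `v` in the directed graph with edge relation `E`. -/
def outNbrs [Fintype V] (E : V → V → Prop) [DecidableRel E] (v : V) : Finset V :=
  Finset.univ.filter fun w => E v w

/-- In-neighbors of `v`. -/
def inNbrs [Fintype V] (E : V → V → Prop) [DecidableRel E] (v : V) : Finset V :=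
  Finset.univ.filter fun u => E u v

/-- Out-degree. -/
def doutd [Fintype V] (E : V → V → Prop) [DecidableRel E] (v : V) : ℕ := (outNbrs E v).card

/-- In-degree. -/
def dind [Fintype V] (E : V → V → Prop) [DecidableRel E] (v : V) : ℕ := (inNbrs E v).card

/-- Random-walk transition matrix: from `u`, move to a uniformly random out-neighbor. -/
noncomputable def transMat [Fintype V] (E : V → V → Prop) [DecidableRel E] : Matrix V V ℝ :=
  Matrix.of fun u v => if E u v then (1 : ℝ) / doutd E u else 0

/-- Personalized PageRank `π(u,t)`: probability that an `α`-discounted random walk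
(length `ℓ` with probability `α(1-α)^ℓ`) started at `u` terminates at `t`. -/
noncomputable def ppr [Fintype V] [DecidableEq V] (α : ℝ) (E : V → V → Prop) [DecidableRel E]
    (u t : V) : ℝ :=
  ∑' ℓ : ℕ, α * (1 - α) ^ ℓ * (transMat E ^ ℓ) u t

/-- PageRank `π(t)`: probability that an `α`-discounted random walk started at a uniformly
random node terminates at `t`. -/
noncomputable def pgrk [Fintype V] [DecidableEq V] (α : ℝ) (E : V → V → Prop) [DecidableRel E]
    (t : V) : ℝ :=
  (1 / (Fintype.card V : ℝ)) * ∑ u : V, ppr α E u t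

/-- The pushback operation of `ApproxContributions` on node `v`: the state is a pair
(reserves, residues); `α·r(v)` is added to the reserve of `v`, `(1-α)·r(v)/d_out(u)` is
added to the residue of every in-neighbor `u` of `v`, and the residue of `v` is zeroed. -/
noncomputable def pushback [Fintype V] [DecidableEq V] (α : ℝ) (E : V → V → Prop)
    [DecidableRel E] (s : (V → ℝ) × (V → ℝ)) (v : V) : (V → ℝ) × (V → ℝ) :=
  (Function.update s.1 v (s.1 v + α * s.2 v),
   fun w => if w = v then 0
            else s.2 w + (if E w v then (1 - α) * s.2 v / (doutd E w : ℝ) else 0))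

/-- Initial state of `ApproxContributions(t, α, ε)`: zero reserves, residue 1 at `t`. -/
noncomputable def initState [DecidableEq V] (t : V) : (V → ℝ) × (V → ℝ) :=
  (fun _ => 0, fun w => if w = t then (1 : ℝ) else 0)

/-! The quantity `p(v) + ∑_w r(w) π(v,w)` starts out as `π(v,t)` and never increases under a
pushback, because `π(v,·)` satisfies the last-step recursion
`π(v,x) = α [v = x] + (1-α) ∑_w π(v,w) P(w,x)`; as residues stay nonnegative, this keeps every
reserve below its PPR value. Each pushback on `v` adds more than `α ε` to `p(v)`, so
`α ε SP(v) ≤ p(v) ≤ π(v,t)`; summing over `v` gives the total count. -/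

namespace Matrix

variable {n : Type*} [Fintype n] [DecidableEq n] {P : Matrix n n ℝ}

theorem sum_pow_apply_le_one (hP₀ : ∀ i j, 0 ≤ P i j) (hP₁ : ∀ i, ∑ j, P i j ≤ 1) (k : ℕ)
    (i : n) : ∑ j, (P ^ k) i j ≤ 1 := by
  induction k with
  | zero => simp [one_apply]
  | succ k ih =>
    calc ∑ j, (P ^ (k + 1)) i j = ∑ l, (P ^ k) i l * ∑ j, P l j := by
          simp only [pow_succ, mul_apply, mul_sum]
          exact sum_comm
      _ ≤ ∑ l, (P ^ k) i l :=
          sum_le_sum fun l _ => mul_le_of_le_one_right (pow_apply_nonneg hP₀ k i l) (hP₁ l)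
      _ ≤ 1 := ih

theorem pow_apply_le_one (hP₀ : ∀ i j, 0 ≤ P i j) (hP₁ : ∀ i, ∑ j, P i j ≤ 1) (k : ℕ)
    (i j : n) : (P ^ k) i j ≤ 1 :=
  (single_le_sum (fun l _ => pow_apply_nonneg hP₀ k i l) (mem_univ j)).trans
    (sum_pow_apply_le_one hP₀ hP₁ k i)

variable {α : ℝ}

theorem summable_discounted_pow_apply (hα₀ : 0 < α) (hα₁ : α ≤ 1) (hP₀ : ∀ i j, 0 ≤ P i j)
    (hP₁ : ∀ i, ∑ j, P i j ≤ 1) (i j : n) :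
    Summable fun ℓ : ℕ => α * (1 - α) ^ ℓ * (P ^ ℓ) i j := by
  have h1α : 0 ≤ 1 - α := by linarith
  refine Summable.of_nonneg_of_le
    (fun ℓ => mul_nonneg (by positivity) (pow_apply_nonneg hP₀ ℓ i j))
    (fun ℓ => mul_le_of_le_one_right (by positivity) (pow_apply_le_one hP₀ hP₁ ℓ i j))
    ((summable_geometric_of_lt_one h1α (by linarith)).mul_left α)

theorem tsum_discounted_pow_apply_eq (hα₀ : 0 < α) (hα₁ : α ≤ 1) (hP₀ : ∀ i j, 0 ≤ P i j)
    (hP₁ : ∀ i, ∑ j, P i j ≤ 1) (i j : n) :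
    ∑' ℓ : ℕ, α * (1 - α) ^ ℓ * (P ^ ℓ) i j
      = α * (1 : Matrix n n ℝ) i j
        + (1 - α) * ∑ k, (∑' ℓ : ℕ, α * (1 - α) ^ ℓ * (P ^ ℓ) i k) * P k j := by
  have hsum := summable_discounted_pow_apply hα₀ hα₁ hP₀ hP₁ i
  have hstep : ∀ ℓ : ℕ, α * (1 - α) ^ (ℓ + 1) * (P ^ (ℓ + 1)) i j
      = ∑ k, α * (1 - α) ^ ℓ * (P ^ ℓ) i k * ((1 - α) * P k j) := by
    intro ℓ
    rw [pow_succ P, mul_apply, mul_sum]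
    exact sum_congr rfl fun k _ => by ring
  rw [(hsum j).tsum_eq_zero_add, pow_zero, pow_zero, mul_one]
  simp_rw [hstep]
  rw [Summable.tsum_finsetSum fun k _ => (hsum k).mul_right _, mul_sum]
  simp_rw [tsum_mul_right]
  exact congrArg _ (sum_congr rfl fun k _ => by ring)

end Matrix

section Graph

variable [Fintype V] (E : V → V → Prop) [DecidableRel E]

theorem transMat_nonneg (u v : V) : 0 ≤ transMat E u v := by
  simp only [transMat, Matrix.of_apply]
  split <;> positivity

theorem sum_transMat_le_one (u : V) : ∑ v, transMat E u v ≤ 1 := by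
  simp only [transMat, Matrix.of_apply]
  rw [← sum_filter, sum_const, nsmul_eq_mul, mul_one_div]
  exact div_self_le_one _

variable [DecidableEq V] {α : ℝ}

theorem ppr_nonneg (hα₀ : 0 < α) (hα₁ : α ≤ 1) (u v : V) : 0 ≤ ppr α E u v := by
  have h1α : 0 ≤ 1 - α := by linarith
  exact tsum_nonneg fun ℓ =>
    mul_nonneg (by positivity) (Matrix.pow_apply_nonneg (transMat_nonneg E) ℓ u v)

theorem ppr_eq_add_sum_ppr_mul_transMat (hα₀ : 0 < α) (hα₁ : α ≤ 1) (v x : V) :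
    ppr α E v x = α * (1 : Matrix V V ℝ) v x + (1 - α) * ∑ w, ppr α E v w * transMat E w x :=
  Matrix.tsum_discounted_pow_apply_eq hα₀ hα₁ (transMat_nonneg E) (sum_transMat_le_one E) v x

theorem card_mul_pgrk (t : V) : (Fintype.card V : ℝ) * pgrk α E t = ∑ u, ppr α E u t := by
  rcases isEmpty_or_nonempty V with hV | hV
  · simp
  · rw [pgrk, ← mul_assoc, mul_one_div_cancel (by exact_mod_cast Fintype.card_ne_zero), one_mul]

theorem pushback_fst_apply (s : (V → ℝ) × (V → ℝ)) (x v : V) :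
    (pushback α E s x).1 v = s.1 v + if v = x then α * s.2 x else 0 := by
  simp only [pushback, Function.update_apply]
  split_ifs with h
  · rw [h]
  · rw [add_zero]

theorem pushback_snd_apply (s : (V → ℝ) × (V → ℝ)) (x w : V) :
    (pushback α E s x).2 w = if w = x then 0 else s.2 w + (1 - α) * s.2 x * transMat E w x := by
  simp only [pushback, transMat, Matrix.of_apply]
  split_ifs <;> ring

theorem pushback_snd_nonneg (hα₁ : α ≤ 1) {s : (V → ℝ) × (V → ℝ)} (hs : ∀ w, 0 ≤ s.2 w)
    (x w : V) : 0 ≤ (pushback α E s x).2 w := by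
  have h1α : 0 ≤ 1 - α := by linarith
  rw [pushback_snd_apply]
  split_ifs
  · exact le_rfl
  · exact add_nonneg (hs w) (mul_nonneg (mul_nonneg h1α (hs x)) (transMat_nonneg E w x))

noncomputable def pprPotential (α : ℝ) (s : (V → ℝ) × (V → ℝ)) (v : V) : ℝ :=
  s.1 v + ∑ w, s.2 w * ppr α E v w

theorem pprPotential_initState (t v : V) : pprPotential E α (initState t) v = ppr α E v t := by
  simp [pprPotential, initState]

/-- The defect is the share of `r(x)` that a self-loop at `x` sends back to `x`, where the
residue is then zeroed. -/
theorem pprPotential_pushback (hα₀ : 0 < α) (hα₁ : α ≤ 1) (s : (V → ℝ) × (V → ℝ)) (x v : V) :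
    pprPotential E α (pushback α E s x) v
      = pprPotential E α s v - (1 - α) * s.2 x * transMat E x x * ppr α E v x := by
  have hrec := ppr_eq_add_sum_ppr_mul_transMat E hα₀ hα₁ v x
  have hsnd : ∑ w, (pushback α E s x).2 w * ppr α E v w
      = ∑ w, s.2 w * ppr α E v w + (1 - α) * s.2 x * ∑ w, ppr α E v w * transMat E w x
        - (s.2 x + (1 - α) * s.2 x * transMat E x x) * ppr α E v x := by
    have hterm : ∀ w, (pushback α E s x).2 w * ppr α E v w
        = (s.2 w + (1 - α) * s.2 x * transMat E w x) * ppr α E v w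
          - if w = x then (s.2 x + (1 - α) * s.2 x * transMat E x x) * ppr α E v x else 0 := by
      intro w
      rw [pushback_snd_apply]
      split_ifs with h
      · rw [h, zero_mul, sub_self]
      · rw [sub_zero]
    simp only [hterm, sum_sub_distrib, sum_ite_eq', mem_univ, if_true, add_mul, sum_add_distrib,
      mul_sum]
    congr 2
    exact sum_congr rfl fun w _ => by ring
  rw [pprPotential, pprPotential, pushback_fst_apply, hsnd]
  rw [Matrix.one_apply] at hrec
  split_ifs at hrec ⊢ <;> linear_combination (-s.2 x) * hrec

theorem pprPotential_pushback_le (hα₀ : 0 < α) (hα₁ : α ≤ 1) {s : (V → ℝ) × (V → ℝ)} {x : V}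
    (hx : 0 ≤ s.2 x) (v : V) :
    pprPotential E α (pushback α E s x) v ≤ pprPotential E α s v := by
  have h1α : 0 ≤ 1 - α := by linarith
  rw [pprPotential_pushback E hα₀ hα₁]
  have := ppr_nonneg E hα₀ hα₁ v x
  have := transMat_nonneg E x x
  exact sub_le_self _ (by positivity)

def IsPushbackRun (α ε : ℝ) (s : (V → ℝ) × (V → ℝ)) (L : List V) : Prop :=
  ∀ i : Fin L.length, ε < ((L.take i).foldl (pushback α E) s).2 (L.get i)

variable {E}

theorem IsPushbackRun.lt_head {ε : ℝ} {s : (V → ℝ) × (V → ℝ)} {x : V} {L : List V}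
    (h : IsPushbackRun E α ε s (x :: L)) : ε < s.2 x :=
  h ⟨0, L.length.succ_pos⟩

theorem IsPushbackRun.tail {ε : ℝ} {s : (V → ℝ) × (V → ℝ)} {x : V} {L : List V}
    (h : IsPushbackRun E α ε s (x :: L)) : IsPushbackRun E α ε (pushback α E s x) L :=
  fun i => h i.succ

variable (E)

theorem foldl_pushback_snd_nonneg (hα₁ : α ≤ 1) (L : List V) {s : (V → ℝ) × (V → ℝ)}
    (hs : ∀ w, 0 ≤ s.2 w) (w : V) : 0 ≤ (L.foldl (pushback α E) s).2 w := by
  induction L generalizing s with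
  | nil => exact hs w
  | cons x L ih => exact ih (pushback_snd_nonneg E hα₁ hs x)

theorem pprPotential_foldl_pushback_le (hα₀ : 0 < α) (hα₁ : α ≤ 1) (L : List V)
    {s : (V → ℝ) × (V → ℝ)} (hs : ∀ w, 0 ≤ s.2 w) (v : V) :
    pprPotential E α (L.foldl (pushback α E) s) v ≤ pprPotential E α s v := by
  induction L generalizing s with
  | nil => exact le_rfl
  | cons x L ih =>
    exact (ih (pushback_snd_nonneg E hα₁ hs x)).trans (pprPotential_pushback_le E hα₀ hα₁ (hs x) v)

theorem add_mul_count_le_foldl_pushback_fst (hα₀ : 0 ≤ α) {ε : ℝ} (L : List V)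
    {s : (V → ℝ) × (V → ℝ)} (hL : IsPushbackRun E α ε s L) (v : V) :
    s.1 v + α * ε * L.count v ≤ (L.foldl (pushback α E) s).1 v := by
  induction L generalizing s with
  | nil => simp
  | cons x L ih =>
    have hstep : s.1 v + α * ε * (if v = x then 1 else 0) ≤ (pushback α E s x).1 v := by
      rw [pushback_fst_apply]
      split_ifs
      · nlinarith [hL.lt_head]
      · rw [mul_zero]
    calc s.1 v + α * ε * (x :: L).count v
        = s.1 v + α * ε * (if v = x then 1 else 0) + α * ε * L.count v := by
          simp only [List.count_cons, beq_iff_eq, @eq_comm _ x v]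
          push_cast
          ring
      _ ≤ (pushback α E s x).1 v + α * ε * L.count v := by gcongr
      _ ≤ ((x :: L).foldl (pushback α E) s).1 v := ih hL.tail

theorem mul_count_le_ppr (hα₀ : 0 < α) (hα₁ : α ≤ 1) {ε : ℝ} (t : V) {L : List V}
    (hL : IsPushbackRun E α ε (initState t) L) (v : V) :
    α * ε * L.count v ≤ ppr α E v t := by
  have hinit : ∀ w, 0 ≤ (initState t : (V → ℝ) × (V → ℝ)).2 w := fun w => by
    simp only [initState]
    split <;> norm_num
  set final := L.foldl (pushback α E) (initState t)
  calc α * ε * L.count v = (initState t : (V → ℝ) × (V → ℝ)).1 v + α * ε * L.count v := by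
        simp [initState]
    _ ≤ final.1 v := add_mul_count_le_foldl_pushback_fst E hα₀.le L hL v
    _ ≤ pprPotential E α final v :=
        le_add_of_nonneg_right <| sum_nonneg fun w _ =>
          mul_nonneg (foldl_pushback_snd_nonneg E hα₁ L hinit w) (ppr_nonneg E hα₀ hα₁ v w)
    _ ≤ pprPotential E α (initState t) v := pprPotential_foldl_pushback_le E hα₀ hα₁ L hinit v
    _ = ppr α E v t := pprPotential_initState E t v

end Graph

theorem List.sum_count_eq_length {ι : Type*} [Fintype ι] [DecidableEq ι] (L : List ι) :
    ∑ i, L.count i = L.length := by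
  rw [← L.sum_toFinset_count_eq_length]
  exact (sum_subset (subset_univ _) fun i _ hi => List.count_eq_zero.mpr (by simpa using hi)).symm

theorem approxContributions_pushback_count_general [Fintype V] [DecidableEq V]
    (E : V → V → Prop) [DecidableRel E]
    (α : ℝ) (hα : α ∈ Set.Ioo (0 : ℝ) 1)
    (ε : ℝ) (hε : ε ∈ Set.Ioc (0 : ℝ) 1) (t : V)
    (L : List V)
    (hvalid : ∀ i : Fin L.length,
      ε < ((L.take i).foldl (pushback α E) (initState t)).2 (L.get i)) :
    (∀ v : V, (L.count v : ℝ) ≤ ppr α E v t / (α * ε)) ∧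
      (L.length : ℝ) ≤ (Fintype.card V : ℝ) * pgrk α E t / (α * ε) := by
  have hαε : 0 < α * ε := mul_pos hα.1 hε.1
  have hcount : ∀ v : V, (L.count v : ℝ) ≤ ppr α E v t / (α * ε) := fun v => by
    rw [le_div_iff₀ hαε, mul_comm]
    exact mul_count_le_ppr E hα.1 hα.2.le t hvalid v
  refine ⟨hcount, ?_⟩
  calc (L.length : ℝ) = ∑ v, (L.count v : ℝ) := by exact_mod_cast L.sum_count_eq_length.symm
    _ ≤ ∑ v, ppr α E v t / (α * ε) := sum_le_sum fun v _ => hcount v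
    _ = (Fintype.card V : ℝ) * pgrk α E t / (α * ε) := by rw [card_mul_pgrk, sum_div]

/-- In any run of `ApproxContributions(t, α, ε)` (a sequence `L` of pushback
operations, each performed on a node whose current residue exceeds `ε`), the number `SP(v)`
of pushbacks performed on `v` satisfies `SP(v) ≤ π(v,t)/(α·ε)`, and hence the total number of
pushbacks is at most `n·π(t)/(α·ε)`. -/
theorem approxContributions_pushback_count [Fintype V] [DecidableEq V]
    (E : V → V → Prop) [DecidableRel E]
    (α : ℝ) (hα : α ∈ Set.Ioo (0 : ℝ) 1) (hpos : ∀ v : V, 0 < doutd E v)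
    (ε : ℝ) (hε : ε ∈ Set.Ioc (0 : ℝ) 1) (t : V)
    (L : List V)
    (hvalid : ∀ i : Fin L.length,
      ε < ((L.take i).foldl (pushback α E) (initState t)).2 (L.get i)) :
    (∀ v : V, (L.count v : ℝ) ≤ ppr α E v t / (α * ε)) ∧
      (L.length : ℝ) ≤ (Fintype.card V : ℝ) * pgrk α E t / (α * ε) :=
  approxContributions_pushback_count_general E α hα ε hε t L hvalid
end

section
/- If p, r : V → ℝ≥0 satisfy π(t) = (1/n)Σ_v p(v) + Σ_v π(v)·r(v) with r(v) ≤ ε for all v, and χ_v = [X = v] where P(X = v) = π(v), then the variance of the bidirectional estimator q(t) = (1/n)Σ_v p(v) + Σ_v χ_v·r(v) satisfies Var[q(t)] ≤ Σ_v π(v)·r(v)² ≤ ε·π(t). -/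
open Finset

section WeightedVariance

variable {ι : Type*} (s : Finset ι) (w f : ι → ℝ)

theorem sum_mul_sub_weightedMean_sq (hw : ∑ i ∈ s, w i = 1) :
    ∑ i ∈ s, w i * (f i - ∑ j ∈ s, w j * f j) ^ 2 =
      ∑ i ∈ s, w i * f i ^ 2 - (∑ i ∈ s, w i * f i) ^ 2 := by
  set m := ∑ j ∈ s, w j * f j
  have expand : ∀ i, w i * (f i - m) ^ 2 = w i * f i ^ 2 - 2 * m * (w i * f i) + m ^ 2 * w i :=
    fun i => by ring
  simp only [expand, sum_add_distrib, sum_sub_distrib, ← mul_sum, hw]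
  ring

theorem sum_mul_sub_weightedMean_sq_le (hw : ∑ i ∈ s, w i = 1) :
    ∑ i ∈ s, w i * (f i - ∑ j ∈ s, w j * f j) ^ 2 ≤ ∑ i ∈ s, w i * f i ^ 2 := by
  rw [sum_mul_sub_weightedMean_sq s w f hw]
  exact sub_le_self _ (sq_nonneg _)

theorem sum_mul_sq_le_mul_sum_mul {ε : ℝ} (hw : ∀ i ∈ s, 0 ≤ w i) (hf : ∀ i ∈ s, 0 ≤ f i)
    (hfε : ∀ i ∈ s, f i ≤ ε) :
    ∑ i ∈ s, w i * f i ^ 2 ≤ ε * ∑ i ∈ s, w i * f i := by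
  rw [mul_sum]
  refine sum_le_sum fun i hi => ?_
  calc w i * f i ^ 2 = (w i * f i) * f i := by ring
    _ ≤ (w i * f i) * ε := mul_le_mul_of_nonneg_left (hfε i hi) (mul_nonneg (hw i hi) (hf i hi))
    _ = ε * (w i * f i) := mul_comm _ _

end WeightedVariance

/-- If `p, r ≥ 0` satisfy `π(t) = (1/n)Σ_v p(v) + Σ_v π(v)·r(v)` with
`r(v) ≤ ε`, then the variance of the bidirectional estimator
`q(t) = (1/n)Σ_v p(v) + Σ_v χ_v·r(v)` (over a single sample `X ~ π`) satisfies
`Var[q(t)] ≤ Σ_v π(v)·r(v)² ≤ ε·π(t)`. -/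
theorem bidirectional_estimator_variance {V : Type*} [Fintype V] [DecidableEq V]
    (π : V → ℝ) (hπ0 : ∀ v, 0 ≤ π v) (hπ1 : ∑ v : V, π v = 1)
    (p r : V → ℝ) (pit ε : ℝ) (hε : 0 ≤ ε)
    (hp0 : ∀ v, 0 ≤ p v) (hr0 : ∀ v, 0 ≤ r v) (hrε : ∀ v, r v ≤ ε)
    (hinv : pit = (1 / (Fintype.card V : ℝ)) * ∑ v : V, p v + ∑ v : V, π v * r v) :
    (∑ x : V, π x *
        (((1 / (Fintype.card V : ℝ)) * ∑ v : V, p v +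
            ∑ v : V, (if x = v then (1 : ℝ) else 0) * r v) - pit) ^ 2 ≤
      ∑ v : V, π v * r v ^ 2) ∧
      ∑ v : V, π v * r v ^ 2 ≤ ε * pit := by
  have estimator_sub_mean : ∀ x : V,
      (1 / (Fintype.card V : ℝ)) * ∑ v : V, p v +
        ∑ v : V, (if x = v then (1 : ℝ) else 0) * r v - pit = r x - ∑ v : V, π v * r v := by
    intro x
    simp only [ite_mul, one_mul, zero_mul, Fintype.sum_ite_eq, hinv]
    ring
  have mean_le_pit : ∑ v : V, π v * r v ≤ pit := by
    rw [hinv]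
    exact le_add_of_nonneg_left (mul_nonneg (by positivity) (sum_nonneg fun v _ => hp0 v))
  refine ⟨?_, ?_⟩
  · simp only [estimator_sub_mean]
    exact sum_mul_sub_weightedMean_sq_le _ π r hπ1
  · calc ∑ v : V, π v * r v ^ 2 ≤ ε * ∑ v : V, π v * r v :=
          sum_mul_sq_le_mul_sum_mul _ π r (fun v _ => hπ0 v) (fun v _ => hr0 v) (fun v _ => hrε v)
      _ ≤ ε * pit := mul_le_mul_of_nonneg_left mean_le_pit hε
end

section
/- In the multi-level structure where level sets V_1, ..., V_L feed into a root t, with each node in level i+1 having exactly 2/(1-α) distinct parents in level i and each non-root node having out-degree 1, the nodes in level i have PageRank score Θ(2^{i-1}/n) and the root satisfies π(t) = Θ(2^L/n). More precisely, if every node in V_1 has PageRank at least a/n and at most b/n for constants 0 < a ≤ b, then every node of V_i has PageRank between (a·2^{i-1} + (2^{i-1}-1)·α)/n and (b·2^{i-1} + 2^{i-1}·α)/n. -/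
open Finset

variable {V : Type*}

/-- Closed form of the recursion `x₀ = c / n`, `x_{i+1} = α / n + 2 xᵢ`, which `π` obeys level by
level once each node has `k = 2 / (1 - α)` parents of out-degree one. -/
noncomputable def levelBound (n α c : ℝ) (i : ℕ) : ℝ := (c * 2 ^ i + (2 ^ i - 1) * α) / n

lemma levelBound_zero (n α c : ℝ) : levelBound n α c 0 = c / n := by
  simp [levelBound]

lemma levelBound_succ (n α c : ℝ) (i : ℕ) :
    levelBound n α c (i + 1) = α / n + 2 * levelBound n α c i := by
  simp only [levelBound]
  ring

lemma levelBound_le (n : ℕ) {α : ℝ} (hα : 0 ≤ α) (c : ℝ) (i : ℕ) :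
    levelBound n α c i ≤ (c * 2 ^ i + 2 ^ i * α) / n := by
  unfold levelBound
  gcongr
  linarith

lemma add_mul_sum_mem_Icc {ι : Type*} (s : Finset ι) {f : ι → ℝ} {c r lo hi : ℝ} (hr : 0 ≤ r)
    (hf : ∀ u ∈ s, f u ∈ Set.Icc lo hi) :
    c + r * ∑ u ∈ s, f u ∈ Set.Icc (c + s.card * r * lo) (c + s.card * r * hi) := by
  have hlo : s.card * lo ≤ ∑ u ∈ s, f u := by
    simpa using s.card_nsmul_le_sum f lo fun u hu => (hf u hu).1
  have hhi : ∑ u ∈ s, f u ≤ s.card * hi := by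
    simpa using s.sum_le_card_nsmul f hi fun u hu => (hf u hu).2
  constructor
  · calc c + s.card * r * lo = c + r * (s.card * lo) := by ring
      _ ≤ c + r * ∑ u ∈ s, f u := by gcongr
  · calc c + r * ∑ u ∈ s, f u ≤ c + r * (s.card * hi) := by gcongr
      _ = c + s.card * r * hi := by ring

section Levels

variable [Fintype V] (E : V → V → Prop) [DecidableRel E] {α : ℝ} {π : V → ℝ}

lemma eq_add_mul_sum_of_doutd_eq_one {c : ℝ} {v : V}
    (hrec : π v = c + ∑ u ∈ inNbrs E v, (1 - α) * π u / (doutd E u : ℝ))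
    (hout : ∀ u ∈ inNbrs E v, doutd E u = 1) :
    π v = c + (1 - α) * ∑ u ∈ inNbrs E v, π u := by
  rw [hrec, mul_sum]
  congr 1
  refine sum_congr rfl fun u hu => ?_
  simp [hout u hu]

theorem mem_Icc_levelBound {k : ℕ} (hk : (k : ℝ) * (1 - α) = 2)
    (hrec : ∀ v : V,
      π v = α / (Fintype.card V : ℝ) +
        ∑ u ∈ inNbrs E v, (1 - α) * π u / (doutd E u : ℝ))
    {L : ℕ} {levels : ℕ → Finset V}
    (hparents : ∀ i, i + 1 < L → ∀ v ∈ levels (i + 1),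
      inNbrs E v ⊆ levels i ∧ (inNbrs E v).card = k)
    (hout : ∀ i, i < L → ∀ v ∈ levels i, doutd E v = 1)
    {a b : ℝ} (hbase : ∀ v ∈ levels 0, π v ∈ Set.Icc (a / Fintype.card V) (b / Fintype.card V)) :
    ∀ i, i < L → ∀ v ∈ levels i,
      π v ∈ Set.Icc (levelBound (Fintype.card V) α a i) (levelBound (Fintype.card V) α b i) := by
  have hα1 : 0 ≤ 1 - α := (pos_of_mul_pos_right (hk ▸ two_pos) k.cast_nonneg).le
  intro i
  induction i with
  | zero =>
    intro _ v hv
    simpa only [levelBound_zero] using hbase v hv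
  | succ i ih =>
    intro hi v hv
    obtain ⟨hsub, hcard⟩ := hparents i hi v hv
    rw [eq_add_mul_sum_of_doutd_eq_one E (hrec v) fun u hu => hout i (by omega) u (hsub hu),
      levelBound_succ, levelBound_succ]
    have hstep := add_mul_sum_mem_Icc (inNbrs E v) (c := α / Fintype.card V) hα1
      fun u hu => ih (by omega) u (hsub hu)
    rwa [hcard, hk] at hstep

end Levels

/-- The level `V_{i+1}` of the informal statement is `levels i`. -/
theorem multilevel_pagerank_bounds_general [Fintype V]
    (E : V → V → Prop) [DecidableRel E]
    (α : ℝ) (hα : α ∈ Set.Ioo (0 : ℝ) 1)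
    (k : ℕ) (hk : (k : ℝ) = 2 / (1 - α))
    (π : V → ℝ)
    (hrec : ∀ v : V,
      π v = α / (Fintype.card V : ℝ) +
        ∑ u ∈ inNbrs E v, (1 - α) * π u / (doutd E u : ℝ))
    (L : ℕ) (levels : ℕ → Finset V)
    (hparents : ∀ i, i + 1 < L → ∀ v ∈ levels (i + 1),
      inNbrs E v ⊆ levels i ∧ (inNbrs E v).card = k)
    (hout : ∀ i, i < L → ∀ v ∈ levels i, doutd E v = 1)
    (a b : ℝ)
    (hbase : ∀ v ∈ levels 0,
      a / (Fintype.card V : ℝ) ≤ π v ∧ π v ≤ b / (Fintype.card V : ℝ)) :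
    ∀ i, i < L → ∀ v ∈ levels i,
      (a * 2 ^ i + ((2 : ℝ) ^ i - 1) * α) / (Fintype.card V : ℝ) ≤ π v ∧
        π v ≤ (b * 2 ^ i + (2 : ℝ) ^ i * α) / (Fintype.card V : ℝ) := by
  obtain ⟨hα0, hα1⟩ := hα
  have hk' : (k : ℝ) * (1 - α) = 2 := by
    rw [hk, div_mul_cancel₀ _ (sub_ne_zero.mpr hα1.ne')]
  intro i hi v hv
  obtain ⟨hlo, hhi⟩ := mem_Icc_levelBound E hk' hrec hparents hout hbase i hi v hv
  exact ⟨hlo, hhi.trans (levelBound_le _ hα0.le b i)⟩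

/-- In the multi-level structure (level `V_{i+1}` nodes have exactly
`k = 2/(1-α)` distinct parents, all in level `V_i`, and every level node has out-degree 1),
if every node of the top level `V_1` (indexed here as `levels 0`) has PageRank between `a/n`
and `b/n`, then every node of `V_{i+1}` (indexed `levels i`) has PageRank between
`(a·2^i + (2^i - 1)·α)/n` and `(b·2^i + 2^i·α)/n`; in particular nodes of level `i` have
PageRank `Θ(2^i/n)`. -/
theorem multilevel_pagerank_bounds [Fintype V] [DecidableEq V]
    (E : V → V → Prop) [DecidableRel E]
    (α : ℝ) (hα : α ∈ Set.Ioo (0 : ℝ) 1)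
    (k : ℕ) (hk : (k : ℝ) = 2 / (1 - α))
    (π : V → ℝ)
    (hrec : ∀ v : V,
      π v = α / (Fintype.card V : ℝ) +
        ∑ u ∈ inNbrs E v, (1 - α) * π u / (doutd E u : ℝ))
    (L : ℕ) (hL : 0 < L) (levels : ℕ → Finset V)
    (hparents : ∀ i, i + 1 < L → ∀ v ∈ levels (i + 1),
      inNbrs E v ⊆ levels i ∧ (inNbrs E v).card = k)
    (hout : ∀ i, i < L → ∀ v ∈ levels i, doutd E v = 1)
    (a b : ℝ) (ha : 0 < a) (hab : a ≤ b)
    (hbase : ∀ v ∈ levels 0,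
      a / (Fintype.card V : ℝ) ≤ π v ∧ π v ≤ b / (Fintype.card V : ℝ)) :
    ∀ i, i < L → ∀ v ∈ levels i,
      (a * 2 ^ i + ((2 : ℝ) ^ i - 1) * α) / (Fintype.card V : ℝ) ≤ π v ∧
        π v ≤ (b * 2 ^ i + (2 : ℝ) ^ i * α) / (Fintype.card V : ℝ) :=
  multilevel_pagerank_bounds_general E α hα k hk π hrec L levels hparents hout a b hbase
end

section
/- For each v ∈ V in the multi-level structure's top level V_1, the Personalized PageRank to the root satisfies π(v,t) = (1-α)^L, where L is the number of levels, and hence π(v,t)/(n·π(t)) = Θ(((1-α)/2)^L) = Θ(1/|V_1|) when the branching factor is 2/(1-α). -/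
/-!
Every non-root node on the path from `V_1` to `t` has a single out-neighbour, so the walk from a
node `v` of level `i` is deterministic: it reaches the absorbing root `t` at step `L - i` and
stays there, i.e. `(transMat E ^ ℓ) v t = [L - i ≤ ℓ]`. The PageRank series is then the
geometric tail `∑_{ℓ ≥ L} α (1 - α) ^ ℓ = (1 - α) ^ L`.
-/

open Finset

variable {V : Type*}

theorem hasSum_geometric_weight_ite {α : ℝ} (hα : α ∈ Set.Ioo (0 : ℝ) 2) (m : ℕ) :
    HasSum (fun ℓ : ℕ => α * (1 - α) ^ ℓ * if m ≤ ℓ then 1 else 0) ((1 - α) ^ m) := by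
  obtain ⟨hα0, hα2⟩ := hα
  have hr : |1 - α| < 1 := by rw [abs_lt]; constructor <;> linarith
  rw [← hasSum_nat_add_iff' m]
  have hzero : ∑ ℓ ∈ range m, α * (1 - α) ^ ℓ * (if m ≤ ℓ then 1 else 0 : ℝ) = 0 :=
    sum_eq_zero fun ℓ hℓ => by simp [Nat.not_le.mpr (mem_range.mp hℓ)]
  have htail := (hasSum_geometric_of_abs_lt_one hr).mul_left (α * (1 - α) ^ m)
  have hvalue : α * (1 - α) ^ m * (1 - (1 - α))⁻¹ = (1 - α) ^ m := by
    rw [sub_sub_cancel, mul_right_comm, mul_inv_cancel₀ hα0.ne', one_mul]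
  have hterm : (fun ℓ => α * (1 - α) ^ m * (1 - α) ^ ℓ) =
      fun ℓ => α * (1 - α) ^ (ℓ + m) * if m ≤ ℓ + m then 1 else 0 := by
    ext ℓ
    rw [if_pos (Nat.le_add_left m ℓ), pow_add]
    ring
  rwa [hzero, sub_zero, ← hvalue, ← hterm]

section DeterministicWalk

variable [Fintype V] [DecidableEq V] {E : V → V → Prop} [DecidableRel E]

theorem transMat_apply_of_outNbrs_eq_singleton {u w : V} (h : outNbrs E u = {w}) (x : V) :
    transMat E u x = if x = w then 1 else 0 := by
  have hdeg : doutd E u = 1 := by rw [doutd, h, card_singleton]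
  have hE : E u x ↔ x = w := by
    rw [← mem_singleton, ← h]
    simp [outNbrs]
  simp [transMat, hE, hdeg]

theorem transMat_pow_succ_apply_of_outNbrs_eq_singleton {u w : V} (h : outNbrs E u = {w})
    (ℓ : ℕ) (t : V) : (transMat E ^ (ℓ + 1)) u t = (transMat E ^ ℓ) w t := by
  rw [pow_succ', Matrix.mul_apply]
  simp [transMat_apply_of_outNbrs_eq_singleton h, ite_mul]

theorem transMat_pow_apply_self_of_outNbrs_eq_singleton {t : V} (h : outNbrs E t = {t})
    (ℓ : ℕ) : (transMat E ^ ℓ) t t = 1 := by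
  induction ℓ with
  | zero => simp
  | succ ℓ ih => rw [transMat_pow_succ_apply_of_outNbrs_eq_singleton h, ih]

theorem transMat_pow_apply_eq_ite_of_outNbrs_eq_singleton {v w t : V} {m : ℕ}
    (hvt : v ≠ t) (hv : outNbrs E v = {w})
    (hw : ∀ ℓ, (transMat E ^ ℓ) w t = if m ≤ ℓ then 1 else 0) (ℓ : ℕ) :
    (transMat E ^ ℓ) v t = if m + 1 ≤ ℓ then 1 else 0 := by
  cases ℓ with
  | zero => simp [hvt]
  | succ ℓ => simp [transMat_pow_succ_apply_of_outNbrs_eq_singleton hv, hw]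

theorem ppr_eq_of_transMat_pow_apply_eq_ite {α : ℝ} (hα : α ∈ Set.Ioo (0 : ℝ) 2) {u t : V}
    {m : ℕ}     (h : ∀ ℓ, (transMat E ^ ℓ) u t = if m ≤ ℓ then 1 else 0) :
    ppr α E u t = (1 - α) ^ m := by
  simp only [ppr, h]
  exact (hasSum_geometric_weight_ite hα m).tsum_eq

theorem transMat_pow_apply_eq_ite_of_mem_levels {t : V} {L : ℕ} {levels : ℕ → Finset V}
    (hself : outNbrs E t = {t})
    (htout : ∀ i, i < L → t ∉ levels i)
    (hstep : ∀ i, i + 1 < L → ∀ v ∈ levels i, ∃ w ∈ levels (i + 1), outNbrs E v = {w})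
    (hlast : ∀ v ∈ levels (L - 1), outNbrs E v = {t}) (k : ℕ) :
    ∀ i, i + k + 1 = L → ∀ v ∈ levels i, ∀ ℓ,
      (transMat E ^ ℓ) v t = if k + 1 ≤ ℓ then 1 else 0 := by
  induction k with
  | zero =>
    intro i hi v hv
    have hvt : v ≠ t := fun h => htout i (by omega) (h ▸ hv)
    refine transMat_pow_apply_eq_ite_of_outNbrs_eq_singleton hvt
      (hlast v (by rwa [show L - 1 = i by omega])) fun ℓ => ?_
    simp [transMat_pow_apply_self_of_outNbrs_eq_singleton hself]
  | succ k ih =>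
    intro i hi v hv
    have hvt : v ≠ t := fun h => htout i (by omega) (h ▸ hv)
    obtain ⟨w, hw, hvw⟩ := hstep i (by omega) v hv
    exact transMat_pow_apply_eq_ite_of_outNbrs_eq_singleton hvt hvw (ih (i + 1) (by omega) w hw)

end DeterministicWalk

theorem multilevel_ppr_to_root_general [Fintype V] [DecidableEq V]
    (E : V → V → Prop) [DecidableRel E]
    (α : ℝ) (hα : α ∈ Set.Ioo (0 : ℝ) 1)
    (t : V) (L : ℕ) (hL : 0 < L) (levels : ℕ → Finset V)
    (hself : outNbrs E t = {t})
    (htout : ∀ i, i < L → t ∉ levels i)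
    (hstep : ∀ i, i + 1 < L → ∀ v ∈ levels i, ∃ w ∈ levels (i + 1), outNbrs E v = {w})
    (hlast : ∀ v ∈ levels (L - 1), outNbrs E v = {t}) :
    ∀ v ∈ levels 0, ppr α E v t = (1 - α) ^ L := by
  intro v hv
  obtain ⟨k, rfl⟩ : ∃ k, L = k + 1 := ⟨L - 1, by omega⟩
  exact ppr_eq_of_transMat_pow_apply_eq_ite ⟨hα.1, by linarith [hα.2]⟩
    (transMat_pow_apply_eq_ite_of_mem_levels hself htout hstep hlast k 0 (by omega) v hv)

/-- In the multi-level structure (every node of level `V_i` has out-degree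
exactly 1, pointing into `V_{i+1}`, nodes of the last level point to the root `t`, and the
walk is absorbed at `t` via its self-loop), every node `v` of the top level `V_1`
(indexed `levels 0`) has Personalized PageRank `π(v,t) = (1-α)^L` to the root. -/
theorem multilevel_ppr_to_root [Fintype V] [DecidableEq V]
    (E : V → V → Prop) [DecidableRel E]
    (α : ℝ) (hα : α ∈ Set.Ioo (0 : ℝ) 1) (hpos : ∀ v : V, 0 < doutd E v)
    (t : V) (L : ℕ) (hL : 0 < L) (levels : ℕ → Finset V)
    (hself : outNbrs E t = {t})
    (htout : ∀ i, i < L → t ∉ levels i)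
    (hstep : ∀ i, i + 1 < L → ∀ v ∈ levels i, ∃ w ∈ levels (i + 1), outNbrs E v = {w})
    (hlast : ∀ v ∈ levels (L - 1), outNbrs E v = {t}) :
    ∀ v ∈ levels 0, ppr α E v t = (1 - α) ^ L :=
  multilevel_ppr_to_root_general E α hα t L hL levels hself htout hstep hlast
end
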